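/- Let F be a filter on ℕ with F ≤ Filter.cofinite and F.NeBot (representing a nontrivial admissible ideal I on ℕ), let E ⊆ ℝ and f : ℝ → ℝ. If f is quasi-slowly oscillating continuous on E (for every sequence x : ℕ → ℝ of points of E such that the difference sequence (fun n => x (n+1) − x n) is slowly oscillating, the sequence (fun n => f (x (n+1)) − f (x n)) is slowly oscillating), then f is I-sequentially continuous on E: for every x₀ ∈ E and every sequence x of points of E with Tendsto x F (𝓝 x₀), one has Tendsto (f ∘ x) F (𝓝 (f x₀)). -/

import Mathlib

/-!
Interleave a sequence `x → x₀` in `E` with the constant `x₀`: `x₀, x 0, x₀, x 1, x₀, …`. Its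
difference sequence tends to `0`, so it is slowly oscillating, and by hypothesis the difference
sequence `d` of its image under `f` is slowly oscillating too. Slow oscillation forces
`d (n + 1) - d n → 0`, and at even indices this second difference is `2 (f x₀ - f (x n))`.
Hence `f` is sequentially continuous, i.e. continuous, within `E`, and continuity within `E`
carries the `F`-convergence of `x` over to `f ∘ x` for any filter `F`.
-/

open Filter Topology

def SlowlyOscillating (x : ℕ → ℝ) : Prop :=
  ∀ ε > (0 : ℝ), ∃ δ > (0 : ℝ), ∃ N : ℕ, ∀ n m : ℕ,
    N ≤ n → n ≤ m → (m : ℝ) ≤ (1 + δ) * n → |x m - x n| < ε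

def QuasiSlowlyOscillating (x : ℕ → ℝ) : Prop :=
  SlowlyOscillating fun n => x (n + 1) - x n

def QuasiSlowlyOscillatingContinuousOn (f : ℝ → ℝ) (E : Set ℝ) : Prop :=
  ∀ x : ℕ → ℝ, (∀ n, x n ∈ E) → QuasiSlowlyOscillating x → QuasiSlowlyOscillating (f ∘ x)

namespace SlowlyOscillating

theorem of_tendsto_zero {d : ℕ → ℝ} (hd : Tendsto d atTop (𝓝 0)) : SlowlyOscillating d := by
  intro ε hε
  obtain ⟨N, hN⟩ := Metric.tendsto_atTop.1 hd (ε / 2) (half_pos hε)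
  refine ⟨1, one_pos, N, fun n m hn hnm _ => ?_⟩
  have hdn : |d n| < ε / 2 := by simpa using hN n hn
  have hdm : |d m| < ε / 2 := by simpa using hN m (hn.trans hnm)
  calc |d m - d n| ≤ |d m| + |d n| := abs_sub _ _
    _ < ε := by linarith

theorem tendsto_sub_succ {d : ℕ → ℝ} (hd : SlowlyOscillating d) :
    Tendsto (fun n => d (n + 1) - d n) atTop (𝓝 0) := by
  refine Metric.tendsto_atTop.2 fun ε hε => ?_
  obtain ⟨δ, hδ, N, hN⟩ := hd ε hε
  obtain ⟨K, hK⟩ := exists_nat_gt (1 / δ)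
  refine ⟨max N K, fun n hn => ?_⟩
  have hKn : (K : ℝ) ≤ n := by exact_mod_cast le_of_max_le_right hn
  have hstep : ((n + 1 : ℕ) : ℝ) ≤ (1 + δ) * n := by
    have : 1 < δ * n := by
      rw [div_lt_iff₀ hδ] at hK
      nlinarith
    push_cast
    linarith
  simpa [Real.dist_eq] using hN n (n + 1) (le_of_max_le_left hn) n.le_succ hstep

end SlowlyOscillating

section Interleave

variable {α : Type*}

def interleave (a : α) (x : ℕ → α) (n : ℕ) : α :=
  if Even n then a else x (n / 2)

@[simp]
theorem interleave_two_mul (a : α) (x : ℕ → α) (k : ℕ) : interleave a x (2 * k) = a := by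
  simp [interleave]

@[simp]
theorem interleave_two_mul_add_one (a : α) (x : ℕ → α) (k : ℕ) :
    interleave a x (2 * k + 1) = x k := by
  simp [interleave, Nat.mul_add_div]

theorem interleave_mem {E : Set α} {a : α} {x : ℕ → α} (ha : a ∈ E) (hx : ∀ n, x n ∈ E) (n : ℕ) :
    interleave a x n ∈ E := by
  unfold interleave
  split_ifs
  exacts [ha, hx _]

theorem comp_interleave {β : Type*} (f : α → β) (a : α) (x : ℕ → α) :
    f ∘ interleave a x = interleave (f a) (f ∘ x) := by
  funext n
  exact apply_ite f (Even n) a (x (n / 2))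

end Interleave

theorem abs_interleave_succ_sub (a : ℝ) (x : ℕ → ℝ) (n : ℕ) :
    |interleave a x (n + 1) - interleave a x n| = |x (n / 2) - a| := by
  obtain ⟨k, rfl | rfl⟩ := Nat.even_or_odd' n
  · simp
  · rw [show 2 * k + 1 + 1 = 2 * (k + 1) by ring, interleave_two_mul, interleave_two_mul_add_one,
      abs_sub_comm, show (2 * k + 1) / 2 = k by omega]

theorem quasiSlowlyOscillating_interleave {a : ℝ} {x : ℕ → ℝ} (hx : Tendsto x atTop (𝓝 a)) :
    QuasiSlowlyOscillating (interleave a x) := by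
  refine SlowlyOscillating.of_tendsto_zero ?_
  have hhalf : Tendsto (fun n : ℕ => x (n / 2) - a) atTop (𝓝 0) := by
    simpa using (hx.comp (Nat.tendsto_div_const_atTop two_ne_zero)).sub_const a
  rw [tendsto_zero_iff_abs_tendsto_zero] at hhalf ⊢
  simpa only [Function.comp_def, abs_interleave_succ_sub] using hhalf

theorem QuasiSlowlyOscillating.tendsto_of_interleave {b : ℝ} {y : ℕ → ℝ}
    (hy : QuasiSlowlyOscillating (interleave b y)) : Tendsto y atTop (𝓝 b) := by
  have hsecond : Tendsto (fun k : ℕ => 2 * (b - y k)) atTop (𝓝 0) := by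
    have := hy.tendsto_sub_succ.comp (tendsto_id.const_mul_atTop' two_pos)
    refine this.congr fun k => ?_
    simp only [Function.comp_apply, id]
    rw [show 2 * k + 1 + 1 = 2 * (k + 1) by ring, interleave_two_mul, interleave_two_mul_add_one,
      interleave_two_mul]
    ring
  have := (hsecond.const_mul (-2⁻¹ : ℝ)).const_add b
  simp only [mul_zero, add_zero] at this
  exact this.congr fun k => by ring

theorem QuasiSlowlyOscillatingContinuousOn.tendsto_comp {f : ℝ → ℝ} {E : Set ℝ}
    (h : QuasiSlowlyOscillatingContinuousOn f E) {x₀ : ℝ} (hx₀ : x₀ ∈ E) {x : ℕ → ℝ}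
    (hxE : ∀ n, x n ∈ E) (hx : Tendsto x atTop (𝓝 x₀)) :
    Tendsto (f ∘ x) atTop (𝓝 (f x₀)) := by
  have := h _ (interleave_mem hx₀ hxE) (quasiSlowlyOscillating_interleave hx)
  rw [comp_interleave] at this
  exact this.tendsto_of_interleave

theorem QuasiSlowlyOscillatingContinuousOn.continuousWithinAt {f : ℝ → ℝ} {E : Set ℝ}
    (h : QuasiSlowlyOscillatingContinuousOn f E) {x₀ : ℝ} (hx₀ : x₀ ∈ E) :
    ContinuousWithinAt f E x₀ := by
  rw [continuousWithinAt_iff_continuousAt_domRestrict f hx₀, ContinuousAt,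
    tendsto_nhds_iff_seq_tendsto]
  intro u hu
  exact h.tendsto_comp hx₀ (fun n => (u n).2) (tendsto_subtype_rng.1 hu)

theorem quasi_slowly_oscillating_continuous_implies_ideal_seq_continuous_general (F : Filter ℕ)
    (E : Set ℝ) (f : ℝ → ℝ)
    (h : ∀ x : ℕ → ℝ, (∀ n, x n ∈ E) →
      SlowlyOscillating (fun n => x (n + 1) - x n) →
      SlowlyOscillating (fun n => f (x (n + 1)) - f (x n))) :
    ∀ x₀ ∈ E, ∀ x : ℕ → ℝ, (∀ n, x n ∈ E) → Tendsto x F (𝓝 x₀) →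
      Tendsto (f ∘ x) F (𝓝 (f x₀)) := by
  intro x₀ hx₀ x hxE hx
  have hcont : ContinuousWithinAt f E x₀ :=
    QuasiSlowlyOscillatingContinuousOn.continuousWithinAt h hx₀
  exact hcont.tendsto.comp (tendsto_nhdsWithin_iff.2 ⟨hx, .of_forall hxE⟩)

theorem quasi_slowly_oscillating_continuous_implies_ideal_seq_continuous (F : Filter ℕ)
    (hF : F ≤ Filter.cofinite) [F.NeBot] (E : Set ℝ) (f : ℝ → ℝ)
    (h : ∀ x : ℕ → ℝ, (∀ n, x n ∈ E) →
      SlowlyOscillating (fun n => x (n + 1) - x n) →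
      SlowlyOscillating (fun n => f (x (n + 1)) - f (x n))) :
    ∀ x₀ ∈ E, ∀ x : ℕ → ℝ, (∀ n, x n ∈ E) → Tendsto x F (𝓝 x₀) →
      Tendsto (f ∘ x) F (𝓝 (f x₀)) :=
  quasi_slowly_oscillating_continuous_implies_ideal_seq_continuous_general F E f h
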